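/- arXiv:1911.03810 — 4 statements merged into one kernel-verified Lean document; each statement's English description precedes it below -/
import Mathlib

section
/- For a continuously differentiable convex function f : ℝ^N → ℝ, if f(θ*) ≤ 0 and f(θ) > 0 with yᵀΓ∇f(θ) > 0 for a symmetric positive definite Γ, then the Γ-projection correction satisfies (θ - θ*)ᵀ Γ⁻¹ (Proj_Γ(θ, y, f) - Γy) ≤ 0, where Proj_Γ(θ, y, f) = Γy - Γ (∇f(θ)(∇f(θ))ᵀ)/((∇f(θ))ᵀ Γ ∇f(θ)) Γ y f(θ). -/
open RealInnerProductSpace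

/-!
The correction `Proj - Γy` equals `-c • Γ∇f(θ)` with `c = f(θ) ⟪∇f(θ), Γy⟫ / ⟪∇f(θ), Γ∇f(θ)⟫ ≥ 0`,
so after applying `Γ⁻¹` the claim reads `-c ⟪θ - θ*, ∇f(θ)⟫ ≤ 0`. By the first-order
characterisation of convexity, `⟪∇f(θ), θ - θ*⟫ ≥ f(θ) - f(θ*) > 0`.
-/

theorem ConvexOn.apply_sub_le_of_hasFDerivAt {E : Type*} [NormedAddCommGroup E] [NormedSpace ℝ E]
    {s : Set E} {f : E → ℝ} {f' : E →L[ℝ] ℝ} {x y : E} (hf : ConvexOn ℝ s f)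
    (hx : x ∈ s) (hy : y ∈ s) (hf' : HasFDerivAt f f' x) :
    f' (y - x) ≤ f y - f x := by
  let ℓ : ℝ →ᵃ[ℝ] E := AffineMap.lineMap x y
  have hline : ConvexOn ℝ (ℓ ⁻¹' s) (f ∘ ℓ) := hf.comp_affineMap ℓ
  have hderiv : HasDerivAt (f ∘ ℓ) (f' (y - x)) 0 :=
    (AffineMap.lineMap_apply_zero (k := ℝ) x y ▸ hf').comp_hasDerivAt 0
      AffineMap.hasDerivAt_lineMap
  simpa [ℓ, slope_def_field] using
    hline.le_slope_of_hasDerivAt (by simpa [ℓ] using hx) (by simpa [ℓ] using hy) one_pos hderiv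

theorem ConvexOn.inner_gradient_sub_le {F : Type*} [NormedAddCommGroup F] [InnerProductSpace ℝ F]
    [CompleteSpace F] {s : Set F} {f : F → ℝ} {x y : F} (hf : ConvexOn ℝ s f)
    (hx : x ∈ s) (hy : y ∈ s) (hdiff : DifferentiableAt ℝ f x) :
    ⟪gradient f x, y - x⟫ ≤ f y - f x := by
  simpa using hf.apply_sub_le_of_hasFDerivAt hx hy hdiff.hasGradientAt.hasFDerivAt

theorem Matrix.toEuclideanLin_inv_apply_toEuclideanLin {𝕜 n : Type*} [RCLike 𝕜] [Fintype n]
    [DecidableEq n] {A : Matrix n n 𝕜} (hA : IsUnit A) (v : EuclideanSpace 𝕜 n) :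
    Matrix.toEuclideanLin A⁻¹ (Matrix.toEuclideanLin A v) = v := by
  simp [Matrix.toLpLin_apply, Matrix.mulVec_mulVec,
    Matrix.nonsing_inv_mul A ((Matrix.isUnit_iff_isUnit_det A).1 hA)]

theorem Matrix.PosSemidef.inner_toEuclideanLin_self_nonneg {n : Type*} [Fintype n] [DecidableEq n]
    {A : Matrix n n ℝ} (hA : A.PosSemidef) (v : EuclideanSpace ℝ n) :
    0 ≤ ⟪v, Matrix.toEuclideanLin A v⟫ :=
  (Matrix.isPositive_toEuclideanLin_iff.2 hA).inner_nonneg_right v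

theorem Matrix.IsHermitian.inner_toEuclideanLin_comm {n : Type*} [Fintype n] [DecidableEq n]
    {A : Matrix n n ℝ} (hA : A.IsHermitian) (v w : EuclideanSpace ℝ n) :
    ⟪v, Matrix.toEuclideanLin A w⟫ = ⟪w, Matrix.toEuclideanLin A v⟫ := by
  rw [← (Matrix.isSymmetric_toEuclideanLin_iff.2 hA) w v, real_inner_comm]

theorem proj_correction_nonpos_general {N : ℕ} (f : EuclideanSpace ℝ (Fin N) → ℝ)
    (hf : ConvexOn ℝ Set.univ f) (hf1 : ContDiff ℝ 1 f)
    (Γ : Matrix (Fin N) (Fin N) ℝ) (hΓpd : Γ.PosDef)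
    (θ θs y : EuclideanSpace ℝ (Fin N))
    (hθs : f θs ≤ 0) (hθ : 0 < f θ)
    (hy : 0 < ⟪y, Matrix.toEuclideanLin Γ (gradient f θ)⟫) :
    let g := gradient f θ
    let G := Matrix.toEuclideanLin Γ
    let Proj := G y - (f θ * ⟪g, G y⟫ / ⟪g, G g⟫) • G g
    ⟪θ - θs, Matrix.toEuclideanLin Γ⁻¹ (Proj - G y)⟫ ≤ 0 := by
  intro g G Proj
  set c := f θ * ⟪g, G y⟫ / ⟪g, G g⟫
  have hc : 0 ≤ c := by
    have hgGy : 0 ≤ ⟪g, G y⟫ := (hΓpd.isHermitian.inner_toEuclideanLin_comm g y).symm ▸ hy.le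
    exact div_nonneg (mul_nonneg hθ.le hgGy) (hΓpd.posSemidef.inner_toEuclideanLin_self_nonneg g)
  have hdescent : 0 ≤ ⟪θ - θs, g⟫ := by
    have hgrad := hf.inner_gradient_sub_le trivial trivial (hf1.differentiable one_ne_zero θ) (y := θs)
    rw [real_inner_comm, ← neg_sub, inner_neg_right]
    linarith
  have hcorr : Matrix.toEuclideanLin Γ⁻¹ (Proj - G y) = -c • g := by
    rw [sub_sub_cancel_left, ← neg_smul, map_smul,
      Matrix.toEuclideanLin_inv_apply_toEuclideanLin hΓpd.isUnit]
  rw [hcorr, inner_smul_right]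
  exact mul_nonpos_of_nonpos_of_nonneg (neg_nonpos.2 hc) hdescent

/-- Lemma 4 (single-column case): the Γ-projection correction is dissipative. -/
theorem proj_correction_nonpos {N : ℕ} (f : EuclideanSpace ℝ (Fin N) → ℝ)
    (hf : ConvexOn ℝ Set.univ f) (hf1 : ContDiff ℝ 1 f)
    (Γ : Matrix (Fin N) (Fin N) ℝ) (hΓsym : Γ.IsSymm) (hΓpd : Γ.PosDef)
    (θ θs y : EuclideanSpace ℝ (Fin N))
    (hθs : f θs ≤ 0) (hθ : 0 < f θ)
    (hy : 0 < ⟪y, Matrix.toEuclideanLin Γ (gradient f θ)⟫) :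
    let g := gradient f θ
    let G := Matrix.toEuclideanLin Γ
    let Proj := G y - (f θ * ⟪g, G y⟫ / ⟪g, G g⟫) • G g
    ⟪θ - θs, Matrix.toEuclideanLin Γ⁻¹ (Proj - G y)⟫ ≤ 0 :=
  proj_correction_nonpos_general f hf hf1 Γ hΓpd θ θs y hθs hθ hy
end

section
/- Let Ω(t) solve Ω̇(t) = -λΩ(t) + λ φ(t)φᵀ(t)/(1 + φᵀ(t)φ(t)), Ω(t₀) = Ω₀ ≥ 0, with λ > 0. If φ is finitely exciting on [t₁, t₂] with level α, i.e. ∫_{t₁}^{t₂} φ(τ)φᵀ(τ) dτ ≥ αI, and d = max_{τ∈[t₁,t₂]}(1 + ‖φ(τ)‖²), then Ω(t₂) ≥ (λα/d) e^{-λ(t₂ - t₁)} I. -/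
/-!
Unrolling the variation-of-constants formula, `xᵀ Ω(t₂) x` is `e^{-λ(t₂-t₀)} xᵀ Ω₀ x ≥ 0` plus
`∫_{t₀}^{t₂} w(τ) ⟨φ(τ), x⟩² dτ` with weight `w(τ) = λ e^{-λ(t₂-τ)} / (1 + ‖φ(τ)‖²) ≥ 0`.
Dropping the part of the integral over `[t₀, t₁]` and bounding `w` below on `[t₁, t₂]` by
`λ e^{-λ(t₂-t₁)} / d` leaves `λ e^{-λ(t₂-t₁)} / d` times the excitation integral,
which is at least `α ‖x‖²`.
-/

open RealInnerProductSpace MeasureTheory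
open scoped Matrix

theorem intervalIntegral_le_of_nonneg_of_le_on {f g : ℝ → ℝ} {a b c : ℝ} (hab : a ≤ b)
    (hbc : b ≤ c) (hf : IntervalIntegrable f volume a c) (hg : IntervalIntegrable g volume b c)
    (hf_nonneg : ∀ τ ∈ Set.Icc a b, 0 ≤ f τ) (hgf : ∀ τ ∈ Set.Icc b c, g τ ≤ f τ) :
    ∫ τ in b..c, g τ ≤ ∫ τ in a..c, f τ := by
  have hf_ab := hf.mono_set (Set.uIcc_subset_uIcc_left (Set.mem_uIcc_of_le hab hbc))
  have hf_bc := hf.mono_set (Set.uIcc_subset_uIcc_right (Set.mem_uIcc_of_le hab hbc))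
  rw [← intervalIntegral.integral_add_adjacent_intervals hf_ab hf_bc]
  linarith [intervalIntegral.integral_nonneg (μ := volume) hab hf_nonneg,
    intervalIntegral.integral_mono_on hbc hg hf_bc hgf]

namespace Matrix

variable {n : Type*}

theorem isHermitian_of_intervalIntegral {F : ℝ → Matrix n n ℝ} {a b : ℝ}
    (hF : ∀ τ, (F τ).IsHermitian) : (of fun i j => ∫ τ in a..b, F τ i j).IsHermitian := by
  ext i j
  simp only [conjTranspose_apply, of_apply, star_trivial]
  exact intervalIntegral.integral_congr fun τ _ => (hF τ).apply i j

variable [Fintype n]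

theorem dotProduct_mulVec_intervalIntegral {F : ℝ → Matrix n n ℝ} {a b : ℝ}
    (hF : ∀ i j, IntervalIntegrable (fun τ => F τ i j) volume a b) (x : n → ℝ) :
    x ⬝ᵥ (of fun i j => ∫ τ in a..b, F τ i j) *ᵥ x = ∫ τ in a..b, x ⬝ᵥ F τ *ᵥ x := by
  have hterm : ∀ i j, IntervalIntegrable (fun τ => x i * (F τ i j * x j)) volume a b :=
    fun i j => ((hF i j).mul_const _).const_mul _
  simp only [dotProduct, mulVec, of_apply, Finset.mul_sum, ← intervalIntegral.integral_mul_const,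
    ← intervalIntegral.integral_const_mul]
  rw [intervalIntegral.integral_finsetSum (f := fun i τ => ∑ j, x i * (F τ i j * x j))
    fun i _ => by simpa only [Finset.sum_fn] using IntervalIntegrable.sum _ fun j _ => hterm i j]
  exact Finset.sum_congr rfl fun i _ =>
    (intervalIntegral.integral_finsetSum fun j _ => hterm i j).symm

theorem dotProduct_smul_vecMulVec_self_mulVec (c : ℝ) (u x : n → ℝ) :
    x ⬝ᵥ (c • vecMulVec u u) *ᵥ x = c * (u ⬝ᵥ x) ^ 2 := by
  rw [smul_mulVec, vecMulVec_mulVec, dotProduct_smul, dotProduct_smul]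
  simp [dotProduct_comm x u, sq]

theorem posSemidef_sub_smul_one [DecidableEq n] {M : Matrix n n ℝ} {c : ℝ} (hM : M.IsHermitian)
    (h : ∀ x, c * (x ⬝ᵥ x) ≤ x ⬝ᵥ M *ᵥ x) : (M - c • 1).PosSemidef := by
  refine .of_dotProduct_mulVec_nonneg (hM.sub (isHermitian_one.smul (.all c))) fun x => ?_
  simpa [sub_mulVec, dotProduct_sub, smul_mulVec, dotProduct_smul] using h x

end Matrix

section WeightedGram

variable {ι : Type*} [Fintype ι]

noncomputable def weightedGram (w : ℝ → ℝ) (φ : ℝ → EuclideanSpace ℝ ι) (a b : ℝ) :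
    Matrix ι ι ℝ :=
  .of fun i j => ∫ τ in a..b, w τ * (φ τ i * φ τ j)

theorem weightedGram_isHermitian (w : ℝ → ℝ) (φ : ℝ → EuclideanSpace ℝ ι) (a b : ℝ) :
    (weightedGram w φ a b).IsHermitian :=
  Matrix.isHermitian_of_intervalIntegral (F := fun τ => w τ • Matrix.vecMulVec (φ τ) (φ τ))
    fun τ => by
      simpa using (Matrix.posSemidef_vecMulVec_self_star (φ τ).ofLp).isHermitian.smul (.all (w τ))

theorem dotProduct_weightedGram_mulVec {w : ℝ → ℝ} {φ : ℝ → EuclideanSpace ℝ ι}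
    (hw : Continuous w) (hφ : Continuous φ) (a b : ℝ) (x : ι → ℝ) :
    x ⬝ᵥ weightedGram w φ a b *ᵥ x = ∫ τ in a..b, w τ * ⟪φ τ, WithLp.toLp 2 x⟫ ^ 2 := by
  have hF : ∀ i j, IntervalIntegrable (fun τ => (w τ • Matrix.vecMulVec (φ τ) (φ τ)) i j)
      volume a b := fun i j => by
    simp only [Matrix.smul_apply, Matrix.vecMulVec_apply, smul_eq_mul]
    exact Continuous.intervalIntegrable (by fun_prop) _ _
  refine (Matrix.dotProduct_mulVec_intervalIntegral hF x).trans
    (intervalIntegral.integral_congr fun τ _ => ?_)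
  rw [Matrix.dotProduct_smul_vecMulVec_self_mulVec, EuclideanSpace.inner_eq_star_dotProduct,
    star_trivial, dotProduct_comm]

theorem posSemidef_weightedGram_sub_smul_one [DecidableEq ι] {w : ℝ → ℝ}
    {φ : ℝ → EuclideanSpace ℝ ι} {a b c κ α : ℝ} (hw : Continuous w) (hφ : Continuous φ)
    (hab : a ≤ b) (hbc : b ≤ c) (hw_nonneg : ∀ τ ∈ Set.Icc a b, 0 ≤ w τ)
    (hκw : ∀ τ ∈ Set.Icc b c, κ ≤ w τ) (hκ : 0 ≤ κ)
    (hFE : ∀ v : EuclideanSpace ℝ ι, α * ‖v‖ ^ 2 ≤ ∫ τ in b..c, ⟪φ τ, v⟫ ^ 2) :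
    (weightedGram w φ a c - (κ * α) • 1).PosSemidef := by
  refine Matrix.posSemidef_sub_smul_one (weightedGram_isHermitian w φ a c) fun x => ?_
  set v : EuclideanSpace ℝ ι := WithLp.toLp 2 x
  have hnorm : ‖v‖ ^ 2 = x ⬝ᵥ x := by
    rw [← real_inner_self_eq_norm_sq, EuclideanSpace.inner_eq_star_dotProduct, star_trivial]
  have hq : Continuous fun τ => ⟪φ τ, v⟫ ^ 2 := by fun_prop
  calc κ * α * (x ⬝ᵥ x) = κ * (α * ‖v‖ ^ 2) := by rw [hnorm, mul_assoc]
    _ ≤ κ * ∫ τ in b..c, ⟪φ τ, v⟫ ^ 2 := mul_le_mul_of_nonneg_left (hFE v) hκ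
    _ = ∫ τ in b..c, κ * ⟪φ τ, v⟫ ^ 2 := (intervalIntegral.integral_const_mul _ _).symm
    _ ≤ ∫ τ in a..c, w τ * ⟪φ τ, v⟫ ^ 2 :=
      intervalIntegral_le_of_nonneg_of_le_on hab hbc ((hw.mul hq).intervalIntegrable _ _)
        ((hq.const_mul κ).intervalIntegrable _ _)
        (fun τ hτ => mul_nonneg (hw_nonneg τ hτ) (sq_nonneg _))
        fun τ hτ => mul_le_mul_of_nonneg_right (hκw τ hτ) (sq_nonneg _)
    _ = x ⬝ᵥ weightedGram w φ a c *ᵥ x := (dotProduct_weightedGram_mulVec hw hφ a c x).symm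

end WeightedGram

theorem Omega_FE_lower_bound_general {N : ℕ} (t₀ t₁ t₂ lam α d : ℝ)
    (hlam : 0 < lam) (ht₀ : t₀ ≤ t₁) (ht₁ : t₁ < t₂)
    (φ : ℝ → EuclideanSpace ℝ (Fin N)) (hφ : Continuous φ)
    (Ω₀ : Matrix (Fin N) (Fin N) ℝ) (hΩ₀ : Ω₀.PosSemidef)
    (Ω : ℝ → Matrix (Fin N) (Fin N) ℝ)
    (hΩ : ∀ t, ∀ i j, Ω t i j =
      Real.exp (-lam * (t - t₀)) * Ω₀ i j +
        ∫ τ in t₀..t, Real.exp (-lam * (t - τ)) * lam * (φ τ i * φ τ j) / (1 + ‖φ τ‖^2))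
    (hFE : ∀ v : EuclideanSpace ℝ (Fin N),
      α * ‖v‖^2 ≤ ∫ τ in t₁..t₂, (⟪φ τ, v⟫ : ℝ)^2)
    (hd : ∀ τ ∈ Set.Icc t₁ t₂, 1 + ‖φ τ‖^2 ≤ d) :
    (Ω t₂ - (lam * α / d * Real.exp (-lam * (t₂ - t₁))) •
        (1 : Matrix (Fin N) (Fin N) ℝ)).PosSemidef := by
  set w : ℝ → ℝ := fun τ => Real.exp (-lam * (t₂ - τ)) * lam / (1 + ‖φ τ‖ ^ 2)
  have hΩt₂ : Ω t₂ = Real.exp (-lam * (t₂ - t₀)) • Ω₀ + weightedGram w φ t₀ t₂ := by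
    ext i j
    rw [hΩ, Matrix.add_apply, Matrix.smul_apply, smul_eq_mul, weightedGram, Matrix.of_apply]
    exact congrArg _ (intervalIntegral.integral_congr fun τ _ => by ring)
  have hw : Continuous w := by
    have hD : ∀ τ, 1 + ‖φ τ‖ ^ 2 ≠ 0 := fun τ => by positivity
    fun_prop (disch := exact hD)
  have hd_pos : 0 < d := by linarith [hd t₁ ⟨le_rfl, ht₁.le⟩, sq_nonneg ‖φ t₁‖]
  have hκw : ∀ τ ∈ Set.Icc t₁ t₂, lam * Real.exp (-lam * (t₂ - t₁)) / d ≤ w τ := fun τ hτ => by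
    have hexp : Real.exp (-lam * (t₂ - t₁)) ≤ Real.exp (-lam * (t₂ - τ)) :=
      Real.exp_le_exp.mpr (by nlinarith [hτ.1])
    rw [mul_comm lam]
    exact div_le_div₀ (by positivity) (by gcongr) (by positivity) (hd τ hτ)
  have hgram := posSemidef_weightedGram_sub_smul_one hw hφ ht₀ ht₁.le
    (fun τ _ => by positivity) hκw (by positivity) hFE
  rw [hΩt₂, add_sub_assoc, show lam * α / d * Real.exp (-lam * (t₂ - t₁)) =
    lam * Real.exp (-lam * (t₂ - t₁)) / d * α by ring]
  exact (hΩ₀.smul (Real.exp_pos _).le).add hgram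

/-- Lemma 6, part 3 (core estimate): finite excitation of the regressor over [t₁, t₂]
gives a positive definite lower bound Ω(t₂) ≥ (λα/d)e^{-λ(t₂-t₁)} I. -/
theorem Omega_FE_lower_bound {N : ℕ} (t₀ t₁ t₂ lam α d : ℝ)
    (hlam : 0 < lam) (hα : 0 < α) (ht₀ : t₀ ≤ t₁) (ht₁ : t₁ < t₂)
    (φ : ℝ → EuclideanSpace ℝ (Fin N)) (hφ : Continuous φ)
    (Ω₀ : Matrix (Fin N) (Fin N) ℝ) (hΩ₀ : Ω₀.PosSemidef)
    (Ω : ℝ → Matrix (Fin N) (Fin N) ℝ)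
    (hΩ : ∀ t, ∀ i j, Ω t i j =
      Real.exp (-lam * (t - t₀)) * Ω₀ i j +
        ∫ τ in t₀..t, Real.exp (-lam * (t - τ)) * lam * (φ τ i * φ τ j) / (1 + ‖φ τ‖^2))
    (hFE : ∀ v : EuclideanSpace ℝ (Fin N),
      α * ‖v‖^2 ≤ ∫ τ in t₁..t₂, (⟪φ τ, v⟫ : ℝ)^2)
    (hd : ∀ τ ∈ Set.Icc t₁ t₂, 1 + ‖φ τ‖^2 ≤ d) :
    (Ω t₂ - (lam * α / d * Real.exp (-lam * (t₂ - t₁))) •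
        (1 : Matrix (Fin N) (Fin N) ℝ)).PosSemidef :=
  Omega_FE_lower_bound_general t₀ t₁ t₂ lam α d hlam ht₀ ht₁ φ hφ Ω₀ hΩ₀ Ω hΩ hFE hd
end

section
/- Let F : ℝ^{N×N} → ℝ be continuously differentiable along a differentiable curve Γ(t) satisfying Γ̇(t) = λ Proj(Γ(t), 𝒴(t), F) with Proj(Γ, 𝒴, F) = (1 - F(Γ))𝒴 if F(Γ) > 0 and Tr[𝒴ᵀ∇F(Γ)] > 0, else 𝒴, and λ > 0. If F(Γ(t₀)) ≤ 1, then F(Γ(t)) ≤ 1 for all t ≥ t₀. -/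
open scoped Classical in
/-- Lemma 7, part 1: projection keeps F(Γ(t)) ≤ 1 under
Γ̇ = λ Proj(Γ, Ycal, F), where the projected dynamics give
d/dt F(Γ(t)) = λTr[Ycalᵀ∇F(Γ)](1 - F(Γ)) in the limiting region and
d/dt F(Γ(t)) = λTr[Ycalᵀ∇F(Γ)] otherwise. -/
theorem proj_F_invariant {N : ℕ} (t₀ lam : ℝ) (hlam : 0 < lam)
    (F : Matrix (Fin N) (Fin N) ℝ → ℝ) (hF : ConvexOn ℝ Set.univ F)
    (Γ Ycal gradF : ℝ → Matrix (Fin N) (Fin N) ℝ)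
    (hcont : Continuous fun t => Matrix.trace ((Ycal t).transpose * gradF t))
    (hderiv : ∀ t, t₀ ≤ t →
      HasDerivAt (fun s => F (Γ s))
        (if 0 < F (Γ t) ∧ 0 < Matrix.trace ((Ycal t).transpose * gradF t) then
          lam * Matrix.trace ((Ycal t).transpose * gradF t) * (1 - F (Γ t))
        else lam * Matrix.trace ((Ycal t).transpose * gradF t)) t)
    (hnonincr : ∀ t, t₀ ≤ t → ¬(0 < F (Γ t) ∧ 0 < Matrix.trace ((Ycal t).transpose * gradF t)) →
      Matrix.trace ((Ycal t).transpose * gradF t) ≤ 0)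
    (hinit : F (Γ t₀) ≤ 1) :
    ∀ t, t₀ ≤ t → F (Γ t) ≤ 1 := by
  intro t₁ ht₁
  by_contra hgt
  push_neg at hgt
  set f : ℝ → ℝ := fun s => F (Γ s) with hf
  have hfc : ContinuousOn f (Set.Icc t₀ t₁) := fun t ht =>
    ((hderiv t ht.1).continuousAt).continuousWithinAt
  set A : Set ℝ := Set.Icc t₀ t₁ ∩ f ⁻¹' Set.Iic 1 with hA
  have hAne : A.Nonempty := ⟨t₀, ⟨le_refl _, ht₁⟩, hinit⟩
  have hAbdd : BddAbove A := ⟨t₁, fun x hx => hx.1.2⟩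
  have hAcl : IsClosed A :=
    hfc.preimage_isClosed_of_isClosed isClosed_Icc isClosed_Iic
  have hsA : sSup A ∈ A := hAcl.csSup_mem hAne hAbdd
  set s := sSup A with hs
  have hst₀ : t₀ ≤ s := hsA.1.1
  have hst₁ : s ≤ t₁ := hsA.1.2
  have hfs : f s ≤ 1 := hsA.2
  have hslt : s < t₁ := by
    rcases lt_or_eq_of_le hst₁ with h | h
    · exact h
    · exact absurd (h ▸ hfs) (not_le.mpr hgt)
  -- On (s, t₁], f > 1.
  have hfgt : ∀ t ∈ Set.Ioc s t₁, 1 < f t := by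
    intro t ht
    by_contra hle
    push_neg at hle
    have : t ∈ A := ⟨⟨le_trans hst₀ ht.1.le, ht.2⟩, hle⟩
    exact absurd (le_csSup hAbdd this) (not_le.mpr ht.1)
  -- f is antitone on [s, t₁].
  have hanti : AntitoneOn f (Set.Icc s t₁) := by
    have hint : interior (Set.Icc s t₁) = Set.Ioo s t₁ := interior_Icc
    apply antitoneOn_of_deriv_nonpos (convex_Icc s t₁)
    · exact hfc.mono (Set.Icc_subset_Icc_left hst₀)
    · intro x hx
      rw [hint] at hx
      exact ((hderiv x (le_trans hst₀ hx.1.le)).differentiableAt).differentiableWithinAt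
    · intro x hx
      rw [hint] at hx
      have hx₀ : t₀ ≤ x := le_trans hst₀ hx.1.le
      have hd := (hderiv x hx₀).deriv
      rw [hd]
      by_cases hc : 0 < F (Γ x) ∧ 0 < Matrix.trace ((Ycal x).transpose * gradF x)
      · rw [if_pos hc]
        have h1 : 1 < f x := hfgt x ⟨hx.1, hx.2.le⟩
        have : (1 : ℝ) - F (Γ x) ≤ 0 := by simp only [hf] at h1; linarith
        have hpos : 0 ≤ lam * Matrix.trace ((Ycal x).transpose * gradF x) :=
          le_of_lt (mul_pos hlam hc.2)
        exact mul_nonpos_of_nonneg_of_nonpos hpos this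
      · rw [if_neg hc]
        exact mul_nonpos_of_nonneg_of_nonpos hlam.le (hnonincr x hx₀ hc)
  have := hanti ⟨le_refl s, hst₁⟩ ⟨hslt.le, le_refl t₁⟩ hslt.le
  exact absurd (le_trans this hfs) (not_le.mpr hgt)
end

section
/- Let f : ℝ^N → ℝ be continuously differentiable and suppose a differentiable curve θ(t) satisfies the scalar ODE relation: ḟ(θ(t)) = g(t)(1 - f(θ(t))) whenever f(θ(t)) > 0 and g(t) > 0, and ḟ(θ(t)) = g(t) ≤ 0 otherwise (g(t) := y(t)ᵀΓ∇f(θ(t))). If f(θ(t₀)) ≤ 1, then f(θ(t)) ≤ 1 for all t ≥ t₀. -/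
/-!
Along the trajectory, `h(t) = f(θ(t))` has nonpositive derivative whenever `h(t) > 1`: either
`h' = g (1 - h)` with `g > 0`, or `h' = g ≤ 0`. A function that cannot increase while above the
level `1` and starts at or below it stays there; this is a barrier argument against the slightly
rising fences `1 + ε (t - t₀ + 1)`, letting `ε → 0`.
-/

open RealInnerProductSpace

open Set in
theorem image_le_of_deriv_right_nonpos_above {f f' : ℝ → ℝ} {a b C : ℝ}
    (hf : ContinuousOn f (Icc a b)) (hf' : ∀ x ∈ Ico a b, HasDerivWithinAt f (f' x) (Ici x) x)
    (ha : f a ≤ C) (bound : ∀ x ∈ Ico a b, C < f x → f' x ≤ 0) :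
    ∀ ⦃x⦄, x ∈ Icc a b → f x ≤ C := by
  intro x hx
  refine le_of_forall_pos_le_add fun δ hδ => ?_
  have hlen : 0 < x - a + 1 := by linarith [hx.1]
  set ε := δ / (x - a + 1)
  have hε : 0 < ε := div_pos hδ hlen
  have hB : ∀ y, HasDerivAt (fun y => C + ε * (y - a + 1)) ε y := fun y => by
    simpa using (((hasDerivAt_id y).sub_const a).add_const 1).const_mul ε |>.const_add C
  have fence := image_le_of_deriv_right_lt_deriv_boundary hf hf' (by nlinarith) hB
    (fun y hy hfy => (bound y hy (by nlinarith [hy.1])).trans_lt hε) hx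
  have hδ_eq : ε * (x - a + 1) = δ := div_mul_cancel₀ δ hlen.ne'
  linarith

open scoped Classical in
theorem proj_f_invariant_general {N : ℕ} (t₀ : ℝ)
    (f : EuclideanSpace ℝ (Fin N) → ℝ)
    (θ : ℝ → EuclideanSpace ℝ (Fin N))
    (g : ℝ → ℝ)
    (hderiv : ∀ t, t₀ ≤ t →
      if 0 < f (θ t) ∧ 0 < g t then
        HasDerivAt (fun s => f (θ s)) (g t * (1 - f (θ t))) t
      else HasDerivAt (fun s => f (θ s)) (g t) t ∧ g t ≤ 0)
    (hinit : f (θ t₀) ≤ 1) :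
    ∀ t, t₀ ≤ t → f (θ t) ≤ 1 := by
  intro t ht
  set h' : ℝ → ℝ := fun x => if 0 < f (θ x) ∧ 0 < g x then g x * (1 - f (θ x)) else g x
  have hh' : ∀ x, t₀ ≤ x →
      HasDerivAt (fun s => f (θ s)) (h' x) x ∧ (1 < f (θ x) → h' x ≤ 0) := by
    intro x hx
    have hx' := hderiv x hx
    simp only [h']
    split_ifs at hx' ⊢ with hpos
    · exact ⟨hx', fun h1 => mul_nonpos_of_nonneg_of_nonpos hpos.2.le (by linarith)⟩
    · exact ⟨hx'.1, fun _ => hx'.2⟩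
  exact image_le_of_deriv_right_nonpos_above
    (fun x hx => (hh' x hx.1).1.continuousAt.continuousWithinAt)
    (fun x hx => (hh' x hx.1).1.hasDerivWithinAt) hinit (fun x hx => (hh' x hx.1).2) ⟨ht, le_rfl⟩

open scoped Classical in
/-- Lemma 8 (scalar invariance): under the Γ-projection update θ̇ = Proj_Γ(θ, y, f),
the sublevel set {f ≤ 1} is invariant: if f(θ(t₀)) ≤ 1 then f(θ(t)) ≤ 1 for t ≥ t₀,
where g(t) = y(t)ᵀΓ∇f(θ(t)). -/
theorem proj_f_invariant {N : ℕ} (t₀ : ℝ)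
    (f : EuclideanSpace ℝ (Fin N) → ℝ) (hf1 : ContDiff ℝ 1 f)
    (Γ : Matrix (Fin N) (Fin N) ℝ) (hΓsym : Γ.IsSymm) (hΓpd : Γ.PosDef)
    (θ y : ℝ → EuclideanSpace ℝ (Fin N)) (hθ : Differentiable ℝ θ) (hy : Continuous y)
    (g : ℝ → ℝ)
    (hg : ∀ t, g t = ⟪y t, Matrix.toEuclideanLin Γ (gradient f (θ t))⟫)
    (hderiv : ∀ t, t₀ ≤ t →
      if 0 < f (θ t) ∧ 0 < g t then
        HasDerivAt (fun s => f (θ s)) (g t * (1 - f (θ t))) t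
      else HasDerivAt (fun s => f (θ s)) (g t) t ∧ g t ≤ 0)
    (hinit : f (θ t₀) ≤ 1) :
    ∀ t, t₀ ≤ t → f (θ t) ≤ 1 :=
  proj_f_invariant_general t₀ f θ g hderiv hinit
end
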